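/- If M and N are strongly normalizing for βμμ'-reduction and (M N) is not, then either M reduces to some λy.P with P[y := N] not SN, or M reduces to some μα.P with P[α =_r N] not SN, or N reduces to some μα.P with P[α =_l M] not SN. -/

import Mathlib

inductive Trm : Type
  | var : ℕ → Trm
  | lam : ℕ → Trm → Trm
  | app : Trm → Trm → Trm
  | mu  : ℕ → Trm → Trm
  | mvar : ℕ → Trm → Trm
  deriving DecidableEq

inductive Dir : Type
  | l | r
  deriving DecidableEq

/-- Capture-avoiding (naive named) β-substitution M[x := N]. -/
def subst : Trm → ℕ → Trm → Trm
  | Trm.var y, x, N => if y = x then N else Trm.var y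
  | Trm.lam y M, x, N => if y = x then Trm.lam y M else Trm.lam y (subst M x N)
  | Trm.app P Q, x, N => Trm.app (subst P x N) (subst Q x N)
  | Trm.mu a M, x, N => Trm.mu a (subst M x N)
  | Trm.mvar a M, x, N => Trm.mvar a (subst M x N)

/-- μ/μ'-substitution: M[α =_r N] replaces (α U) by (α (U N)); M[α =_l N] replaces (α U) by (α (N U)). -/
def msubst : Trm → ℕ → Dir → Trm → Trm
  | Trm.var y, _, _, _ => Trm.var y
  | Trm.lam y M, a, s, N => Trm.lam y (msubst M a s N)
  | Trm.app P Q, a, s, N => Trm.app (msubst P a s N) (msubst Q a s N)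
  | Trm.mu b M, a, s, N => if b = a then Trm.mu b M else Trm.mu b (msubst M a s N)
  | Trm.mvar b U, a, s, N =>
      let U' := msubst U a s N
      if b = a then
        match s with
        | Dir.r => Trm.mvar b (Trm.app U' N)
        | Dir.l => Trm.mvar b (Trm.app N U')
      else Trm.mvar b U'

abbrev MSub := List (ℕ × Dir × Trm)

def lookupD : MSub → ℕ → Option (Dir × Trm)
  | [], _ => none
  | (b, s, N) :: σ, a => if b = a then some (s, N) else lookupD σ a

/-- Simultaneous μμ'-substitution. -/
def smsubst (σ : MSub) : Trm → Trm
  | Trm.var y => Trm.var y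
  | Trm.lam y M => Trm.lam y (smsubst σ M)
  | Trm.app P Q => Trm.app (smsubst σ P) (smsubst σ Q)
  | Trm.mu b M => Trm.mu b (smsubst (σ.filter (fun p => p.1 != b)) M)
  | Trm.mvar b U =>
      let U' := smsubst σ U
      match lookupD σ b with
      | some (Dir.r, N) => Trm.mvar b (Trm.app U' N)
      | some (Dir.l, N) => Trm.mvar b (Trm.app N U')
      | none => Trm.mvar b U'

def lookupT : List (ℕ × Trm) → ℕ → Option Trm
  | [], _ => none
  | (y, N) :: σ, x => if y = x then some N else lookupT σ x

/-- Simultaneous β-substitution. -/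
def ssubst (σ : List (ℕ × Trm)) : Trm → Trm
  | Trm.var y =>
      match lookupT σ y with
      | some N => N
      | none => Trm.var y
  | Trm.lam y M => Trm.lam y (ssubst (σ.filter (fun p => p.1 != y)) M)
  | Trm.app P Q => Trm.app (ssubst σ P) (ssubst σ Q)
  | Trm.mu a M => Trm.mu a (ssubst σ M)
  | Trm.mvar a M => Trm.mvar a (ssubst σ M)

/-- One step of μμ'-reduction (no β), closed under all contexts. -/
inductive RedM : Trm → Trm → Prop
  | mu : ∀ a M N, RedM (Trm.app (Trm.mu a M) N) (Trm.mu a (msubst M a Dir.r N))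
  | mu' : ∀ a M N, RedM (Trm.app M (Trm.mu a N)) (Trm.mu a (msubst N a Dir.l M))
  | appL : ∀ M M' N, RedM M M' → RedM (Trm.app M N) (Trm.app M' N)
  | appR : ∀ M N N', RedM N N' → RedM (Trm.app M N) (Trm.app M N')
  | lam : ∀ x M M', RedM M M' → RedM (Trm.lam x M) (Trm.lam x M')
  | muC : ∀ a M M', RedM M M' → RedM (Trm.mu a M) (Trm.mu a M')
  | mvarC : ∀ a M M', RedM M M' → RedM (Trm.mvar a M) (Trm.mvar a M')

/-- One step of βμμ'-reduction, closed under all contexts. -/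
inductive Red : Trm → Trm → Prop
  | beta : ∀ x M N, Red (Trm.app (Trm.lam x M) N) (subst M x N)
  | mu : ∀ a M N, Red (Trm.app (Trm.mu a M) N) (Trm.mu a (msubst M a Dir.r N))
  | mu' : ∀ a M N, Red (Trm.app M (Trm.mu a N)) (Trm.mu a (msubst N a Dir.l M))
  | appL : ∀ M M' N, Red M M' → Red (Trm.app M N) (Trm.app M' N)
  | appR : ∀ M N N', Red N N' → Red (Trm.app M N) (Trm.app M N')
  | lam : ∀ x M M', Red M M' → Red (Trm.lam x M) (Trm.lam x M')
  | muC : ∀ a M M', Red M M' → Red (Trm.mu a M) (Trm.mu a M')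
  | mvarC : ∀ a M M', Red M M' → Red (Trm.mvar a M) (Trm.mvar a M')

/-- Strong normalization: no infinite R-reduction sequence from M. -/
def SNr (R : Trm → Trm → Prop) (M : Trm) : Prop := Acc (fun a b => R b a) M

/-- Subterm relation N ≤ M. -/
inductive Subterm : Trm → Trm → Prop
  | refl : ∀ M, Subterm M M
  | lam : ∀ x N M, Subterm N M → Subterm N (Trm.lam x M)
  | appL : ∀ N M P, Subterm N M → Subterm N (Trm.app M P)
  | appR : ∀ N M P, Subterm N P → Subterm N (Trm.app M P)
  | mu : ∀ a N M, Subterm N M → Subterm N (Trm.mu a M)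
  | mvar : ∀ a N M, Subterm N M → Subterm N (Trm.mvar a M)

/-- N ⪯ M : N is a subterm of some reduct of M. -/
def Pre (R : Trm → Trm → Prop) (N M : Trm) : Prop :=
  ∃ M', Relation.ReflTransGen R M M' ∧ Subterm N M'

/-- N ≺ M : N ≤ M' for some M' with M ▷* M' and (M ▷⁺ M' or N < M'). -/
def PreS (R : Trm → Trm → Prop) (N M : Trm) : Prop :=
  ∃ M', Relation.ReflTransGen R M M' ∧ Subterm N M' ∧
    (Relation.TransGen R M M' ∨ N ≠ M')

/-- Number of symbols. -/
def cxty : Trm → ℕ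
  | Trm.var _ => 1
  | Trm.lam _ M => cxty M + 1
  | Trm.app M N => cxty M + cxty N + 1
  | Trm.mu _ M => cxty M + 1
  | Trm.mvar _ M => cxty M + 1

/-- Length of the longest R-reduction starting from M. -/
noncomputable def eta (R : Trm → Trm → Prop) (M : Trm) : ℕ :=
  sSup {n | ∃ f : ℕ → Trm, f 0 = M ∧ ∀ i < n, R (f i) (f (i + 1))}

/-- Left-nested application (h M₁ … Mₙ). -/
def appList (h : Trm) (l : List Trm) : Trm := l.foldl Trm.app h

/-- The substitution M[α =_i (M₁ … Mₙ)] : replaces each (α U) by (α (x M₁ … M_{i-1} U M_{i+1} … Mₙ)),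
    i being a 0-based index into the list. -/
def isubst (a x : ℕ) (l : List Trm) (i : ℕ) : Trm → Trm
  | Trm.var y => Trm.var y
  | Trm.lam y M => Trm.lam y (isubst a x l i M)
  | Trm.app P Q => Trm.app (isubst a x l i P) (isubst a x l i Q)
  | Trm.mu b M => if b = a then Trm.mu b M else Trm.mu b (isubst a x l i M)
  | Trm.mvar b U =>
      let U' := isubst a x l i U
      if b = a then Trm.mvar b (appList (Trm.var x) (l.set i U')) else Trm.mvar b U'

/-- Free μ-variables. -/
def fmv : Trm → Finset ℕ
  | Trm.var _ => ∅
  | Trm.lam _ M => fmv M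
  | Trm.app P Q => fmv P ∪ fmv Q
  | Trm.mu b M => fmv M \ {b}
  | Trm.mvar b M => insert b (fmv M)

/-- Simple types. -/
inductive Ty : Type
  | bot : Ty
  | atom : ℕ → Ty
  | arr : Ty → Ty → Ty
  deriving DecidableEq

/-- Typing judgment Γ; Δ ⊢ M : A where Γ types λ-variables and Δ records, for each
    μ-variable α, the type A such that α : ¬A. -/
inductive Typing : (ℕ → Option Ty) → (ℕ → Option Ty) → Trm → Ty → Prop
  | var : ∀ Γ Δ x A, Γ x = some A → Typing Γ Δ (Trm.var x) A
  | lam : ∀ Γ Δ x M A B, Typing (Function.update Γ x (some A)) Δ M B →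
      Typing Γ Δ (Trm.lam x M) (Ty.arr A B)
  | app : ∀ Γ Δ M N A B, Typing Γ Δ M (Ty.arr A B) → Typing Γ Δ N A →
      Typing Γ Δ (Trm.app M N) B
  | mu : ∀ Γ Δ a M A, Typing Γ (Function.update Δ a (some A)) M Ty.bot →
      Typing Γ Δ (Trm.mu a M) A
  | mvar : ∀ Γ Δ a M A, Δ a = some A → Typing Γ Δ M A →
      Typing Γ Δ (Trm.mvar a M) Ty.bot

open Relation

section Congruence

variable {M M' N N' : Trm}

lemma reflTransGen_red_app (hM : ReflTransGen Red M M') (hN : ReflTransGen Red N N') :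
    ReflTransGen Red (Trm.app M N) (Trm.app M' N') :=
  (hM.lift (Trm.app · N) fun _ _ => Red.appL _ _ _).trans
    (hN.lift (Trm.app M' ·) fun _ _ => Red.appR _ _ _)

lemma reflTransGen_red_lam (x : ℕ) (h : ReflTransGen Red M M') :
    ReflTransGen Red (Trm.lam x M) (Trm.lam x M') :=
  h.lift (Trm.lam x) fun _ _ => Red.lam _ _ _

lemma reflTransGen_red_mu (a : ℕ) (h : ReflTransGen Red M M') :
    ReflTransGen Red (Trm.mu a M) (Trm.mu a M') :=
  h.lift (Trm.mu a) fun _ _ => Red.muC _ _ _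

lemma reflTransGen_red_mvar (a : ℕ) (h : ReflTransGen Red M M') :
    ReflTransGen Red (Trm.mvar a M) (Trm.mvar a M') :=
  h.lift (Trm.mvar a) fun _ _ => Red.mvarC _ _ _

lemma reflTransGen_red_subst (P : Trm) (y : ℕ) (h : Red N N') :
    ReflTransGen Red (subst P y N) (subst P y N') := by
  induction P with
  | var x =>
    unfold subst
    split_ifs
    exacts [.single h, .refl]
  | lam z M ih =>
    unfold subst
    split_ifs
    exacts [.refl, reflTransGen_red_lam z ih]
  | app P Q ihP ihQ => exact reflTransGen_red_app ihP ihQ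
  | mu a M ih => exact reflTransGen_red_mu a ih
  | mvar a M ih => exact reflTransGen_red_mvar a ih

lemma reflTransGen_red_msubst (P : Trm) (a : ℕ) (s : Dir) (h : Red N N') :
    ReflTransGen Red (msubst P a s N) (msubst P a s N') := by
  induction P with
  | var _ => exact .refl
  | lam z M ih => exact reflTransGen_red_lam z ih
  | app P Q ihP ihQ => exact reflTransGen_red_app ihP ihQ
  | mu b M ih =>
    unfold msubst
    split_ifs
    exacts [.refl, reflTransGen_red_mu b ih]
  | mvar b U ih =>
    unfold msubst
    split_ifs
    · cases s
      · exact reflTransGen_red_mvar b (reflTransGen_red_app (.single h) ih)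
      · exact reflTransGen_red_mvar b (reflTransGen_red_app ih (.single h))
    · exact reflTransGen_red_mvar b ih

end Congruence

section StrongNormalization

variable {R : Trm → Trm → Prop} {M M' : Trm}

lemma SNr.of_reflTransGen (h : SNr R M) (hr : ReflTransGen R M M') : SNr R M' := by
  induction hr with
  | refl => exact h
  | tail _ hs ih => exact ih.inv hs

lemma exists_red_not_snr_of_not_snr (h : ¬ SNr R M) : ∃ M', R M M' ∧ ¬ SNr R M' := by
  by_contra! hc
  exact h ⟨M, hc⟩

lemma SNr.mu {a : ℕ} (h : SNr Red M) : SNr Red (Trm.mu a M) := by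
  induction h with
  | intro M _ ih =>
    refine ⟨_, fun Q hQ => ?_⟩
    cases hQ with
    | muC _ _ M' hM' => exact ih M' hM'

end StrongNormalization

def BadHeadRedex (M N : Trm) : Prop :=
  (∃ y P, ReflTransGen Red M (Trm.lam y P) ∧ ¬ SNr Red (subst P y N)) ∨
  (∃ a P, ReflTransGen Red M (Trm.mu a P) ∧ ¬ SNr Red (msubst P a Dir.r N)) ∨
  (∃ a P, ReflTransGen Red N (Trm.mu a P) ∧ ¬ SNr Red (msubst P a Dir.l M))

namespace BadHeadRedex

variable {M M' N N' : Trm}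

lemma of_red_left (hr : Red M M') : BadHeadRedex M' N → BadHeadRedex M N
  | .inl ⟨y, P, hM', hP⟩ => .inl ⟨y, P, .head hr hM', hP⟩
  | .inr (.inl ⟨a, P, hM', hP⟩) => .inr (.inl ⟨a, P, .head hr hM', hP⟩)
  | .inr (.inr ⟨a, P, hN, hP⟩) =>
    .inr (.inr ⟨a, P, hN, fun hs => hP (hs.of_reflTransGen (reflTransGen_red_msubst P a _ hr))⟩)

lemma of_red_right (hr : Red N N') : BadHeadRedex M N' → BadHeadRedex M N
  | .inl ⟨y, P, hM, hP⟩ =>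
    .inl ⟨y, P, hM, fun hs => hP (hs.of_reflTransGen (reflTransGen_red_subst P y hr))⟩
  | .inr (.inl ⟨a, P, hM, hP⟩) =>
    .inr (.inl ⟨a, P, hM, fun hs => hP (hs.of_reflTransGen (reflTransGen_red_msubst P a _ hr))⟩)
  | .inr (.inr ⟨a, P, hN', hP⟩) => .inr (.inr ⟨a, P, .head hr hN', hP⟩)

/-- Some step of `M N` leads to a non-SN term; a head step gives the witness directly, and an
internal step is handled by induction on the SN of `M` and `N`, pulling the witness back. -/
theorem of_not_snr_app (hM : SNr Red M) (hN : SNr Red N) (h : ¬ SNr Red (Trm.app M N)) :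
    BadHeadRedex M N := by
  induction hM generalizing N with
  | intro M _ ihM =>
  induction hN with
  | intro N hNacc ihN =>
  obtain ⟨Q, hstep, hQ⟩ := exists_red_not_snr_of_not_snr h
  cases hstep with
  | beta y P => exact .inl ⟨y, P, .refl, hQ⟩
  | mu a P => exact .inr (.inl ⟨a, P, .refl, fun hs => hQ hs.mu⟩)
  | mu' a _ P => exact .inr (.inr ⟨a, P, .refl, fun hs => hQ hs.mu⟩)
  | appL _ M' _ hM' => exact of_red_left hM' (ihM M' hM' ⟨N, hNacc⟩ hQ)
  | appR _ _ N' hN' => exact of_red_right hN' (ihN N' hN' hQ)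

end BadHeadRedex

theorem stmt9 (M N : Trm) (hM : SNr Red M) (hN : SNr Red N)
    (h : ¬ SNr Red (Trm.app M N)) :
    (∃ y P, Relation.ReflTransGen Red M (Trm.lam y P) ∧ ¬ SNr Red (subst P y N)) ∨
    (∃ a P, Relation.ReflTransGen Red M (Trm.mu a P) ∧ ¬ SNr Red (msubst P a Dir.r N)) ∨
    (∃ a P, Relation.ReflTransGen Red N (Trm.mu a P) ∧ ¬ SNr Red (msubst P a Dir.l M)) :=
  BadHeadRedex.of_not_snr_app hM hN h
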